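/- Let G be a finite weighted graph and (f, Λ) a 1-Laplacian eigenpair (i.e., there exist ξ ∈ ∂‖f‖_1 and Ξ ∈ ∂‖Kf‖_1 with K^T Ξ = Λ ν ⊙ ξ). If A is a strong nodal domain induced by f, then Λ equals the isoperimetric constant of A: Λ = (Σ_{(u,v): u∈A, v∉A} ω_{uv}) / ν(A), where ν(A) = Σ_{u∈A} ν_u. -/

import Mathlib

open Finset

/-- `A` is a strong nodal domain of `f`: a maximal connected subset of the interior
vertices on which `f` has strictly constant sign. -/
def IsStrongNodalDomain {V : Type*} (G : SimpleGraph V) (int : Set V) (f : V → ℝ)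
    (A : Set V) : Prop :=
  A.Nonempty ∧ A ⊆ int ∧ ((∀ u ∈ A, 0 < f u) ∨ (∀ u ∈ A, f u < 0)) ∧
  (G.induce A).Connected ∧
  ∀ B : Set V, A ⊆ B → B ⊆ int → ((∀ u ∈ B, 0 < f u) ∨ (∀ u ∈ B, f u < 0)) →
    (G.induce B).Connected → B = A
/-- The set-valued sign: `{1}` if `x>0`, `[-1,1]` if `x=0`, `{-1}` if `x<0`. -/
def signSet (x : ℝ) : Set ℝ := {s : ℝ | |s| ≤ 1 ∧ s * x = |x|}

/-- `(f, Λ)` is a generalized eigenpair of the graph `1`-Laplacian (with Dirichlet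
boundary `Bd`): there are subgradients `ξ ∈ ∂‖f‖_{ν,1}` and `Ξ ∈ ∂‖Kf‖_1` with
`K^T Ξ = Λ ν ⊙ ξ` on interior vertices. -/
def IsOneEigenpair {V : Type*} [Fintype V] (G : SimpleGraph V) [DecidableRel G.Adj]
    (ω : V → V → ℝ) (ν : V → ℝ) (Bd : Set V) (f : V → ℝ) (Λ : ℝ) : Prop :=
  f ≠ 0 ∧ (∀ u ∈ Bd, f u = 0) ∧
  ∃ ξ : V → ℝ, ∃ Ξ : V → V → ℝ,
    (∀ u, ξ u ∈ signSet (f u)) ∧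
    (∀ u v, G.Adj u v → Ξ u v ∈ signSet (ω u v * (f v - f u))) ∧
    ∀ u, u ∉ Bd →
      (1 / 2) * ∑ v ∈ G.neighborFinset u, ω u v * (Ξ v u - Ξ u v) = Λ * ν u * ξ u

/-!
Sum the eigenvalue equation over the nodal domain `A`; replacing `(f, ξ, Ξ)` by their negatives
we may assume `f > 0` on `A`, so `ξ = 1` there and the right-hand side is `Λ ν(A)`. On the
left, the terms of edges inside `A` cancel in pairs because `ω` is symmetric. For an edge from
`u ∈ A` to `v ∉ A`, maximality of `A` (or the boundary condition) gives `f v ≤ 0 < f u`, which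
pins `Ξ u v = -1` and `Ξ v u = 1`, so the edge contributes exactly `ω u v`.
-/

lemma signSet_eq_one {x s : ℝ} (hx : 0 < x) (hs : s ∈ signSet x) : s = 1 := by
  have h := hs.2
  rw [abs_of_pos hx] at h
  exact mul_right_cancel₀ hx.ne' (h.trans (one_mul x).symm)

lemma signSet_eq_neg_one {x s : ℝ} (hx : x < 0) (hs : s ∈ signSet x) : s = -1 := by
  have h := hs.2
  rw [abs_of_neg hx] at h
  exact mul_right_cancel₀ hx.ne (by linarith)

lemma neg_mem_signSet {x s : ℝ} (hs : s ∈ signSet x) : -s ∈ signSet (-x) :=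
  ⟨by simpa only [abs_neg] using hs.1, by simpa only [neg_mul_neg, abs_neg] using hs.2⟩

lemma flux_eq_two_mul_of_lt {V : Type*} {ω : V → V → ℝ} {f : V → ℝ} {Ξ : V → V → ℝ} {u v : V}
    (hωuv : 0 < ω u v) (hωvu : 0 < ω v u) (hf : f v < f u)
    (hΞuv : Ξ u v ∈ signSet (ω u v * (f v - f u)))
    (hΞvu : Ξ v u ∈ signSet (ω v u * (f u - f v))) :
    ω u v * (Ξ v u - Ξ u v) = 2 * ω u v := by
  rw [signSet_eq_neg_one (mul_neg_of_pos_of_neg hωuv (sub_neg.mpr hf)) hΞuv,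
    signSet_eq_one (mul_pos hωvu (sub_pos.mpr hf)) hΞvu]
  ring

namespace SimpleGraph

variable {V : Type*} (G : SimpleGraph V)

lemma sum_sum_neighborFinset_filter_mem_eq_zero {M : Type*} [AddCommGroup M] [Fintype V]
    [DecidableEq V] [DecidableRel G.Adj] (A : Finset V) {g : V → V → M}
    (hg : ∀ u v, G.Adj u v → g v u = -g u v) :
    ∑ u ∈ A, ∑ v ∈ (G.neighborFinset u).filter (· ∈ A), g u v = 0 := by
  rw [Finset.sum_sigma']
  refine Finset.sum_involution (fun p _ => ⟨p.2, p.1⟩) ?_ ?_ ?_ (fun _ _ => rfl)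
  · rintro ⟨u, v⟩ hp
    simp only [Finset.mem_sigma, Finset.mem_filter, mem_neighborFinset] at hp
    simp [hg u v hp.2.1]
  · rintro ⟨u, v⟩ hp - h
    simp only [Finset.mem_sigma, Finset.mem_filter, mem_neighborFinset] at hp
    exact hp.2.1.ne (congrArg Sigma.fst h).symm
  · rintro ⟨u, v⟩ hp
    simp only [Finset.mem_sigma, Finset.mem_filter, mem_neighborFinset] at hp ⊢
    exact ⟨hp.2.2, hp.2.1.symm, hp.1⟩

end SimpleGraph

section NodalDomain

variable {V : Type*} {G : SimpleGraph V} {int : Set V} {f : V → ℝ} {A : Set V}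

lemma IsStrongNodalDomain.neg (hA : IsStrongNodalDomain G int f A) :
    IsStrongNodalDomain G int (-f) A := by
  have sign_neg : ∀ B : Set V, ((∀ u ∈ B, 0 < (-f) u) ∨ (∀ u ∈ B, (-f) u < 0)) ↔
      ((∀ u ∈ B, 0 < f u) ∨ (∀ u ∈ B, f u < 0)) := by
    intro B
    simp only [Pi.neg_apply, neg_pos, neg_lt_zero]
    exact or_comm
  obtain ⟨hne, hint, hsign, hconn, hmax⟩ := hA
  exact ⟨hne, hint, (sign_neg A).mpr hsign, hconn,
    fun B hAB hB hsignB => hmax B hAB hB ((sign_neg B).mp hsignB)⟩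

lemma IsStrongNodalDomain.nonpos_of_adj (hA : IsStrongNodalDomain G int f A)
    (hpos : ∀ u ∈ A, 0 < f u) {u v : V} (hu : u ∈ A) (huv : G.Adj u v) (hv : v ∈ int)
    (hvA : v ∉ A) : f v ≤ 0 := by
  by_contra! hfv
  obtain ⟨-, hint, -, hconn, hmax⟩ := hA
  have hconn' : (G.induce (A ∪ {u, v})).Connected :=
    SimpleGraph.induce_union_connected hconn.preconnected
      (SimpleGraph.induce_pair_connected_of_adj huv).preconnected ⟨u, hu, by simp⟩
  have hpos' : ∀ w ∈ A ∪ {u, v}, 0 < f w := by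
    rintro w (hw | rfl | rfl)
    exacts [hpos w hw, hpos w hu, hfv]
  have hint' : A ∪ {u, v} ⊆ int :=
    Set.union_subset hint (Set.pair_subset (hint hu) hv)
  have hext := hmax _ Set.subset_union_left hint' (Or.inl hpos') hconn'
  exact hvA (hext ▸ Or.inr (Or.inr rfl))

end NodalDomain

namespace IsOneEigenpair

variable {V : Type*} [Fintype V] {G : SimpleGraph V} [DecidableRel G.Adj]
  {ω : V → V → ℝ} {ν : V → ℝ} {Bd : Set V} {f : V → ℝ} {Λ : ℝ}

lemma neg (heig : IsOneEigenpair G ω ν Bd f Λ) : IsOneEigenpair G ω ν Bd (-f) Λ := by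
  obtain ⟨hf, hBd, ξ, Ξ, hξ, hΞ, heqn⟩ := heig
  refine ⟨neg_ne_zero.mpr hf, fun u hu => by simp [hBd u hu], -ξ, -Ξ,
    fun u => neg_mem_signSet (hξ u), fun u v huv => ?_, fun u hu => ?_⟩
  · simpa only [Pi.neg_apply, neg_sub_neg, ← neg_sub (f v), mul_neg] using
      neg_mem_signSet (hΞ u v huv)
  · simp only [Pi.neg_apply, neg_sub_neg, mul_neg]
    rw [← heqn u hu, ← mul_neg, ← Finset.sum_neg_distrib]
    simp only [← mul_neg, neg_sub]

lemma mul_sum_eq_boundary_weight_of_pos [DecidableEq V] (heig : IsOneEigenpair G ω ν Bd f Λ)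
    (hω : ∀ u v, G.Adj u v → 0 < ω u v) (hωs : ∀ u v, ω u v = ω v u) {A : Finset V}
    (hA : IsStrongNodalDomain G Bdᶜ f A) (hpos : ∀ u ∈ A, 0 < f u) :
    Λ * ∑ u ∈ A, ν u = ∑ u ∈ A, ∑ v ∈ (G.neighborFinset u).filter (· ∉ A), ω u v := by
  obtain ⟨-, hBd, ξ, Ξ, hξ, hΞ, heqn⟩ := heig
  have hinner := G.sum_sum_neighborFinset_filter_mem_eq_zero A
    (g := fun u v => ω u v * (Ξ v u - Ξ u v)) fun u v _ => by rw [hωs]; ring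
  have hboundary : ∀ u ∈ A, ∀ v ∈ (G.neighborFinset u).filter (· ∉ A),
      ω u v * (Ξ v u - Ξ u v) = 2 * ω u v := by
    intro u hu v hv
    rw [Finset.mem_filter, SimpleGraph.mem_neighborFinset] at hv
    have hfv : f v ≤ 0 := by
      by_cases hvBd : v ∈ Bd
      · exact (hBd v hvBd).le
      · exact hA.nonpos_of_adj hpos hu hv.1 hvBd hv.2
    exact flux_eq_two_mul_of_lt (hω u v hv.1) (hω v u hv.1.symm) (hfv.trans_lt (hpos u hu))
      (hΞ u v hv.1) (hΞ v u hv.1.symm)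
  calc Λ * ∑ u ∈ A, ν u = ∑ u ∈ A, Λ * ν u * ξ u := by
        rw [Finset.mul_sum]
        refine Finset.sum_congr rfl fun u hu => ?_
        rw [signSet_eq_one (hpos u hu) (hξ u), mul_one]
    _ = ∑ u ∈ A, 1 / 2 * ∑ v ∈ G.neighborFinset u, ω u v * (Ξ v u - Ξ u v) :=
        Finset.sum_congr rfl fun u hu => (heqn u (hA.2.1 hu)).symm
    _ = 1 / 2 * (∑ u ∈ A, ∑ v ∈ (G.neighborFinset u).filter (· ∈ A),
          ω u v * (Ξ v u - Ξ u v) + ∑ u ∈ A, ∑ v ∈ (G.neighborFinset u).filter (· ∉ A),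
          ω u v * (Ξ v u - Ξ u v)) := by
        simp only [← Finset.mul_sum, ← Finset.sum_add_distrib,
          Finset.sum_filter_add_sum_filter_not]
    _ = ∑ u ∈ A, ∑ v ∈ (G.neighborFinset u).filter (· ∉ A), ω u v := by
        rw [hinner, Finset.sum_congr rfl fun u hu => Finset.sum_congr rfl (hboundary u hu)]
        simp only [← Finset.mul_sum]
        ring

end IsOneEigenpair

/-- If `(f, Λ)` is a `1`-Laplacian eigenpair on a finite weighted graph
(no boundary) and `A` is a strong nodal domain of `f`, then `Λ` equals the isoperimetric
constant of `A`: `Λ = (Σ_{u∈A, v∉A, v∼u} ω_{uv}) / ν(A)`. -/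
theorem oneLap_eigenvalue_eq_isoperimetric {V : Type*} [Fintype V] [DecidableEq V]
    (G : SimpleGraph V) [DecidableRel G.Adj]
    (ω : V → V → ℝ) (ν : V → ℝ)
    (hω : ∀ u v, G.Adj u v → 0 < ω u v) (hωs : ∀ u v, ω u v = ω v u)
    (hν : ∀ u, 0 < ν u)
    (f : V → ℝ) (Λ : ℝ) (heig : IsOneEigenpair G ω ν (∅ : Set V) f Λ)
    (A : Finset V) (hA : IsStrongNodalDomain G Set.univ f (A : Set V)) :
    Λ = (∑ u ∈ A, ∑ v ∈ (G.neighborFinset u).filter (fun v => v ∉ A), ω u v) /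
        (∑ u ∈ A, ν u) := by
  wlog hpos : ∀ u ∈ A, 0 < f u generalizing f
  · have hneg : ∀ u ∈ A, f u < 0 := hA.2.2.1.resolve_left hpos
    exact this (-f) heig.neg hA.neg fun u hu => neg_pos.mpr (hneg u hu)
  have hνA : 0 < ∑ u ∈ A, ν u := Finset.sum_pos (fun u _ => hν u) hA.1
  rw [eq_div_iff hνA.ne']
  rw [← Set.compl_empty] at hA
  exact heig.mul_sum_eq_boundary_weight_of_pos hω hωs hA hpos
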